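/- arXiv:1606.01605 — 4 statements merged into one kernel-verified Lean document; each statement's English description precedes it below -/
import Mathlib

section
/- Let G be a finite cyclic group of order n and let S be a minimal zero-sum sequence of length 4 over G. Then either ind(S) = 1 or ind(S) = 2; moreover, ind(S) = 2 if and only if ||S||_g = 2 for every generator g of G. -/
open Finset

/-- The representative of `z : ZMod n` in `{1, ..., n}`. -/
def rep (n : ℕ) (z : ZMod n) : ℕ := if z = 0 then n else z.val

/-- `g` is a generator of the additive group `ZMod n`. -/
def IsAddGenerator (n : ℕ) (g : ZMod n) : Prop := AddSubgroup.zmultiples g = ⊤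

/-- `x` is a minimal zero-sum sequence of length 4 over `ZMod n`:
it is a zero-sum sequence, but no proper nontrivial subsequence of it has sum zero. -/
def IsMinZeroSum4 (n : ℕ) (x : Fin 4 → ZMod n) : Prop :=
  (∑ i, x i) = 0 ∧
    ∀ T : Finset (Fin 4), T ≠ ∅ → T ≠ Finset.univ → (∑ i ∈ T, x i) ≠ 0

/-- The `g`-norm `‖S‖_g = (y₁ + ⋯ + y₄)/n` where `S = (y₁ g)⋯(y₄ g)`, `1 ≤ yᵢ ≤ n`. -/
noncomputable def gNorm (n : ℕ) (g : ZMod n) (x : Fin 4 → ZMod n) : ℝ :=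
  (∑ i, (rep n (g⁻¹ * x i) : ℝ)) / n

/-- The index of the sequence `x`: the minimum of the `g`-norms over generators `g`. -/
noncomputable def seqIndex (n : ℕ) (x : Fin 4 → ZMod n) : ℝ :=
  sInf {r : ℝ | ∃ g : ZMod n, IsAddGenerator n g ∧ r = gNorm n g x}

/-!
Write `S = (y₁ g)⋯(y₄ g)` with `1 ≤ yᵢ ≤ n`. Since `S` is zero-sum, `n ∣ ∑ yᵢ`; since no term
is zero, `1 ≤ yᵢ ≤ n - 1`, so `‖S‖_g ∈ {1, 2, 3}`. Replacing `g` by `-g` replaces each `yᵢ` by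
`n - yᵢ`, so `‖S‖_{-g} = 4 - ‖S‖_g`. Hence either every norm is `2`, or some norm is `1`.
-/

lemma rep_of_ne_zero {n : ℕ} {z : ZMod n} (hz : z ≠ 0) : rep n z = z.val := if_neg hz

section rep

variable {n : ℕ} [NeZero n]

lemma one_le_rep (z : ZMod n) : 1 ≤ rep n z := by
  unfold rep
  split_ifs with hz
  · exact NeZero.one_le
  · exact ZMod.val_pos.mpr hz

lemma rep_lt {z : ZMod n} (hz : z ≠ 0) : rep n z < n := by
  rw [rep_of_ne_zero hz]
  exact ZMod.val_lt z

lemma natCast_rep (z : ZMod n) : (rep n z : ZMod n) = z := by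
  unfold rep
  split_ifs with hz
  · rw [ZMod.natCast_self, hz]
  · exact ZMod.natCast_zmod_val z

lemma rep_neg_add_rep {z : ZMod n} (hz : z ≠ 0) : rep n (-z) + rep n z = n := by
  have : NeZero z := ⟨hz⟩
  rw [rep_of_ne_zero (neg_ne_zero.mpr hz), rep_of_ne_zero hz, ZMod.val_neg_of_ne_zero]
  exact Nat.sub_add_cancel (ZMod.val_lt z).le

lemma exists_sum_rep_eq_mul {ι : Type*} [Fintype ι] [Nonempty ι] {y : ι → ZMod n}
    (hsum : ∑ i, y i = 0) (hy : ∀ i, y i ≠ 0) :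
    ∃ m, 0 < m ∧ m < Fintype.card ι ∧ ∑ i, rep n (y i) = m * n := by
  obtain ⟨m, hm⟩ : n ∣ ∑ i, rep n (y i) := by
    rw [← ZMod.natCast_eq_zero_iff]
    push_cast
    simpa only [natCast_rep] using hsum
  have hlower : Fintype.card ι ≤ ∑ i, rep n (y i) := by
    simpa using card_nsmul_le_sum univ (fun i => rep n (y i)) 1 fun i _ => one_le_rep (y i)
  have hupper : ∑ i, rep n (y i) < Fintype.card ι * n := by
    simpa using sum_lt_sum_of_nonempty univ_nonempty fun i _ => rep_lt (hy i)
  refine ⟨m, Nat.pos_of_ne_zero ?_, ?_, hm.trans (mul_comm n m)⟩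
  · rintro rfl
    have := Fintype.card_pos (α := ι)
    omega
  · rw [hm, mul_comm] at hupper
    exact Nat.lt_of_mul_lt_mul_right hupper

end rep

lemma isAddGenerator_one (n : ℕ) : IsAddGenerator n 1 := by
  refine (AddSubgroup.eq_top_iff' _).mpr fun z => ?_
  obtain ⟨k, rfl⟩ := ZMod.intCast_surjective z
  exact ⟨k, by simp⟩

namespace IsAddGenerator

variable {n : ℕ} {g : ZMod n}

lemma neg (hg : IsAddGenerator n g) : IsAddGenerator n (-g) :=
  AddSubgroup.zmultiples_neg.trans hg

lemma isUnit (hg : IsAddGenerator n g) : IsUnit g := by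
  obtain ⟨k, hk⟩ := AddSubgroup.mem_zmultiples_iff.mp (hg.symm ▸ AddSubgroup.mem_top 1)
  exact .of_mul_eq_one (k : ZMod n) (by rwa [mul_comm, ← zsmul_eq_mul])

end IsAddGenerator

namespace ZMod

variable {n : ℕ} {u : ZMod n}

lemma isUnit_inv_of_isUnit (hu : IsUnit u) : IsUnit u⁻¹ := by
  obtain ⟨u, rfl⟩ := hu
  rw [inv_coe_unit]
  exact u⁻¹.isUnit

lemma inv_neg_of_isUnit (hu : IsUnit u) : (-u)⁻¹ = -u⁻¹ := by
  obtain ⟨u, rfl⟩ := hu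
  rw [← Units.val_neg, inv_coe_unit, inv_coe_unit, inv_neg, Units.val_neg]

end ZMod

namespace IsMinZeroSum4

variable {n : ℕ} {x : Fin 4 → ZMod n}

lemma ne_zero (hx : IsMinZeroSum4 n x) (i : Fin 4) : x i ≠ 0 := by
  have hi : ({i} : Finset (Fin 4)) ≠ univ := by
    intro h
    simpa using congrArg Finset.card h
  simpa using hx.2 {i} (singleton_ne_empty i) hi

lemma mul_left_ne_zero (hx : IsMinZeroSum4 n x) {u : ZMod n} (hu : IsUnit u) (i : Fin 4) :
    u * x i ≠ 0 :=
  fun h => hx.ne_zero i (hu.mul_right_eq_zero.mp h)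

lemma sum_mul_left (hx : IsMinZeroSum4 n x) (u : ZMod n) : ∑ i, u * x i = 0 := by
  rw [← mul_sum, hx.1, mul_zero]

end IsMinZeroSum4

section gNorm

variable {n : ℕ} [NeZero n] {g : ZMod n} {x : Fin 4 → ZMod n}

lemma exists_gNorm_eq_natCast (hg : IsAddGenerator n g) (hx : IsMinZeroSum4 n x) :
    ∃ m : ℕ, 0 < m ∧ m < 4 ∧ gNorm n g x = m := by
  obtain ⟨m, hm0, hm4, hm⟩ := exists_sum_rep_eq_mul (hx.sum_mul_left g⁻¹)
    (hx.mul_left_ne_zero (ZMod.isUnit_inv_of_isUnit hg.isUnit))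
  refine ⟨m, hm0, by simpa using hm4, ?_⟩
  rw [gNorm, ← Nat.cast_sum, hm, Nat.cast_mul,
    mul_div_cancel_right₀ _ (Nat.cast_ne_zero.mpr (NeZero.ne n))]

lemma one_le_gNorm (hg : IsAddGenerator n g) (hx : IsMinZeroSum4 n x) : 1 ≤ gNorm n g x := by
  obtain ⟨m, hm0, -, hm⟩ := exists_gNorm_eq_natCast hg hx
  rw [hm]
  exact_mod_cast hm0

lemma gNorm_neg (hg : IsAddGenerator n g) (hx : IsMinZeroSum4 n x) :
    gNorm n (-g) x = 4 - gNorm n g x := by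
  have hinv := ZMod.isUnit_inv_of_isUnit hg.isUnit
  have hrep : ∀ i, (rep n ((-g)⁻¹ * x i) : ℝ) = n - rep n (g⁻¹ * x i) := by
    intro i
    rw [ZMod.inv_neg_of_isUnit hg.isUnit, neg_mul, eq_sub_iff_add_eq]
    exact_mod_cast rep_neg_add_rep (hx.mul_left_ne_zero hinv i)
  have hn : (n : ℝ) ≠ 0 := Nat.cast_ne_zero.mpr (NeZero.ne n)
  simp only [gNorm, hrep, sum_sub_distrib, sum_const, card_univ, Fintype.card_fin, nsmul_eq_mul]
  field_simp
  ring

lemma exists_gNorm_eq_one (hg : IsAddGenerator n g) (hx : IsMinZeroSum4 n x)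
    (h2 : gNorm n g x ≠ 2) : ∃ g', IsAddGenerator n g' ∧ gNorm n g' x = 1 := by
  obtain ⟨m, hm0, hm4, hm⟩ := exists_gNorm_eq_natCast hg hx
  interval_cases m
  · exact ⟨g, hg, by simpa using hm⟩
  · exact absurd (by simpa using hm) h2
  · exact ⟨-g, hg.neg, by rw [gNorm_neg hg hx, hm]; norm_num⟩

end gNorm

/-- For a minimal zero-sum sequence `S` of length 4 over a cyclic group of order `n`,
either `ind(S) = 1` or `ind(S) = 2`; moreover `ind(S) = 2` iff `‖S‖_g = 2` for
every generator `g`. -/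
theorem index_one_or_two (n : ℕ) (hn : 0 < n) (x : Fin 4 → ZMod n)
    (hx : IsMinZeroSum4 n x) :
    (seqIndex n x = 1 ∨ seqIndex n x = 2) ∧
      (seqIndex n x = 2 ↔ ∀ g : ZMod n, IsAddGenerator n g → gNorm n g x = 2) := by
  have : NeZero n := ⟨hn.ne'⟩
  by_cases hall : ∀ g, IsAddGenerator n g → gNorm n g x = 2
  · have hidx : seqIndex n x = 2 := by
      have h1 := isAddGenerator_one n
      refine IsLeast.csInf_eq ⟨⟨1, h1, (hall 1 h1).symm⟩, ?_⟩
      rintro r ⟨g, hg, rfl⟩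
      exact (hall g hg).ge
    exact ⟨.inr hidx, iff_of_true hidx hall⟩
  · push Not at hall
    obtain ⟨g, hg, hg2⟩ := hall
    obtain ⟨g', hg', hg'1⟩ := exists_gNorm_eq_one hg hx hg2
    have hidx : seqIndex n x = 1 := by
      refine IsLeast.csInf_eq ⟨⟨g', hg', hg'1.symm⟩, ?_⟩
      rintro r ⟨g, hg, rfl⟩
      exact one_le_gNorm hg hx
    exact ⟨.inl hidx, iff_of_false (by rw [hidx]; norm_num) fun h => hg2 (h g hg)⟩
end

section
/- Let n be a positive integer and let S = (x_1)(x_2)(x_3)(x_4) be a minimal zero-sum sequence over Z/n such that ||S||_g = 2 for all generators g of Z/n and gcd(n, x_i) = 1 for all i. Then Σ_{0 < g < n, gcd(g,n)=1} (g x_2)_n (g x_4)_n = Σ_{0 < g < n, gcd(g,n)=1} (g x_1)_n (g x_3)_n. -/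
open Finset

lemma isUnit_of_gcd_rep_eq_one {n : ℕ} [NeZero n] {z : ZMod n} (h : Nat.gcd n (rep n z) = 1) :
    IsUnit z := by
  by_cases hz : z = 0
  · rw [rep, if_pos hz, Nat.gcd_self] at h
    subst h
    exact isUnit_of_subsingleton z
  · rw [rep_of_ne_zero hz] at h
    simpa using (ZMod.isUnit_iff_coprime z.val n).mpr (Nat.coprime_comm.mp h)

lemma isAddGenerator_of_isUnit {n : ℕ} {u : ZMod n} (hu : IsUnit u) : IsAddGenerator n u := by
  obtain ⟨u, rfl⟩ := hu
  refine (AddSubgroup.eq_top_iff' _).mpr fun a => ⟨ZMod.cast (a * ↑u⁻¹ : ZMod n), ?_⟩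
  change (ZMod.cast (a * ↑u⁻¹ : ZMod n) : ℤ) • (u : ZMod n) = a
  rw [zsmul_eq_mul, ZMod.intCast_zmod_cast, mul_assoc, Units.inv_mul, mul_one]

lemma gNorm_units_inv {n : ℕ} (u : (ZMod n)ˣ) (x : Fin 4 → ZMod n) :
    gNorm n ↑u⁻¹ x = (∑ i, (rep n (u * x i) : ℝ)) / n := by
  rw [gNorm, ZMod.inv_coe_unit, inv_inv]

lemma sum_val_units_mul_eq_two_mul {n : ℕ} [Fact (1 < n)] {x : Fin 4 → ZMod n}
    (hx : ∀ i, IsUnit (x i)) (hnorm : ∀ g : ZMod n, IsAddGenerator n g → gNorm n g x = 2)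
    (u : (ZMod n)ˣ) : ∑ i, ((u * x i : ZMod n).val : ℤ) = 2 * n := by
  have h := hnorm _ (isAddGenerator_of_isUnit (u⁻¹).isUnit)
  rw [gNorm_units_inv, div_eq_iff (by exact_mod_cast (NeZero.ne n))] at h
  simp only [rep_of_ne_zero ((u.isUnit.mul (hx _)).ne_zero)] at h
  exact_mod_cast h

lemma sum_units_comp_mul_right {M R : Type*} [Monoid M] [Fintype Mˣ] [AddCommMonoid R]
    (φ : M → R) (v : Mˣ) : ∑ u : Mˣ, φ (u * v) = ∑ u : Mˣ, φ u := by
  simpa only [Equiv.coe_mulRight, Units.val_mul] using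
    Equiv.sum_comp (Equiv.mulRight v) (fun u => φ u)

lemma sum_coprime_eq_sum_units {M : Type*} [AddCommMonoid M] {n : ℕ} [Fact (1 < n)]
    (φ : ZMod n → M) :
    ∑ g ∈ (Ioo 0 n).filter (fun g => Nat.gcd g n = 1), φ g = ∑ u : (ZMod n)ˣ, φ u := by
  refine sum_bij' (fun g hg => ZMod.unitOfCoprime g (mem_filter.mp hg).2)
    (fun u _ => (u : ZMod n).val) (fun _ _ => mem_univ _) (fun u _ => ?_) (fun g hg => ?_)
    (fun u _ => ?_) (fun g hg => ?_)
  · have hu := (u : ZMod n).val_pos.mpr u.ne_zero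
    simpa [hu, ZMod.val_lt] using ZMod.val_coe_unit_coprime u
  · simp [Nat.mod_eq_of_lt (mem_Ioo.mp (mem_filter.mp hg).1).2]
  · ext; simp
  · simp

lemma sum_mul_eq_sum_mul_of_add_eq {ι R : Type*} [CommRing R] [NoZeroDivisors R] [CharZero R]
    (s : Finset ι) (a b c d : ι → R) (k : R) (hk : ∀ j ∈ s, a j + b j + c j + d j = k)
    (h₁ : ∑ j ∈ s, (b j + d j) = ∑ j ∈ s, (a j + c j))
    (h₂ : ∑ j ∈ s, (b j ^ 2 + d j ^ 2) = ∑ j ∈ s, (a j ^ 2 + c j ^ 2)) :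
    ∑ j ∈ s, b j * d j = ∑ j ∈ s, a j * c j := by
  have key : ∑ j ∈ s, ((b j ^ 2 + d j ^ 2) - (a j ^ 2 + c j ^ 2) + 2 * (b j * d j - a j * c j)) =
      k * (∑ j ∈ s, (b j + d j) - ∑ j ∈ s, (a j + c j)) := by
    rw [mul_sub, mul_sum, mul_sum, ← sum_sub_distrib]
    refine sum_congr rfl fun j hj => ?_
    linear_combination (b j + d j - a j - c j) * hk j hj
  rw [h₁, sub_self, mul_zero, sum_add_distrib, sum_sub_distrib, h₂, sub_self, zero_add,
    ← mul_sum, sum_sub_distrib] at key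
  exact sub_eq_zero.mp ((mul_eq_zero.mp key).resolve_left two_ne_zero)

theorem cross_sums_eq_general (n : ℕ) (x : Fin 4 → ZMod n)
    (hnorm : ∀ g : ZMod n, IsAddGenerator n g → gNorm n g x = 2)
    (hcop : ∀ i, Nat.gcd n (rep n (x i)) = 1) :
    ∑ g ∈ (Finset.Ioo 0 n).filter (fun g => Nat.gcd g n = 1),
        ((g : ZMod n) * x 1).val * ((g : ZMod n) * x 3).val =
      ∑ g ∈ (Finset.Ioo 0 n).filter (fun g => Nat.gcd g n = 1),
        ((g : ZMod n) * x 0).val * ((g : ZMod n) * x 2).val := by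
  rcases le_or_gt n 1 with hn | hn
  · interval_cases n <;> rfl
  have : Fact (1 < n) := ⟨hn⟩
  choose y hy using fun i => isUnit_of_gcd_rep_eq_one (hcop i)
  refine (sum_coprime_eq_sum_units fun z => (z * x 1).val * (z * x 3).val).trans
    (Eq.trans ?_ (sum_coprime_eq_sum_units fun z => (z * x 0).val * (z * x 2).val).symm)
  let a (i : Fin 4) (u : (ZMod n)ˣ) : ℤ := ((u * x i : ZMod n).val : ℤ)
  have hrow (u : (ZMod n)ˣ) : a 0 u + a 1 u + a 2 u + a 3 u = 2 * n := by
    simpa [a, Fin.sum_univ_four] using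
      sum_val_units_mul_eq_two_mul (fun i => hy i ▸ (y i).isUnit) hnorm u
  have hcross := sum_mul_eq_sum_mul_of_add_eq univ (a 0) (a 1) (a 2) (a 3) (2 * n)
    (fun u _ => hrow u)
    (by simp only [a, sum_add_distrib, ← hy,
      sum_units_comp_mul_right fun z : ZMod n => (z.val : ℤ)])
    (by simp only [a, sum_add_distrib, ← hy,
      sum_units_comp_mul_right fun z : ZMod n => (z.val : ℤ) ^ 2])
  simpa only [a, ← Nat.cast_mul, ← Nat.cast_sum, Nat.cast_inj] using hcross

/-- If `S = (x₁)(x₂)(x₃)(x₄)` is a minimal zero-sum sequence over `ZMod n` with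
`‖S‖_g = 2` for all generators `g` and `gcd(n, xᵢ) = 1` for all `i`, then
`∑_{0<g<n, gcd(g,n)=1} (g x₂)_n (g x₄)_n = ∑_{0<g<n, gcd(g,n)=1} (g x₁)_n (g x₃)_n`. -/
theorem cross_sums_eq (n : ℕ) (hn : 0 < n) (x : Fin 4 → ZMod n)
    (hx : IsMinZeroSum4 n x)
    (hnorm : ∀ g : ZMod n, IsAddGenerator n g → gNorm n g x = 2)
    (hcop : ∀ i, Nat.gcd n (rep n (x i)) = 1) :
    ∑ g ∈ (Finset.Ioo 0 n).filter (fun g => Nat.gcd g n = 1),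
        ((g : ZMod n) * x 1).val * ((g : ZMod n) * x 3).val =
      ∑ g ∈ (Finset.Ioo 0 n).filter (fun g => Nat.gcd g n = 1),
        ((g : ZMod n) * x 0).val * ((g : ZMod n) * x 2).val :=
  cross_sums_eq_general n x hnorm hcop
end

section
/- Let k be a prime and h an integer with gcd(h, k) = 1. Then 12k·s(h, k) ≡ h + h̄ (mod k), where h̄ denotes an integer with h·h̄ ≡ 1 (mod k); that is, 12k·s(h,k) is an integer congruent to h + h̄ modulo k. -/
open Finset

/-- The classical Dedekind sum `s(h, k) = ∑_{r=1}^{k} (r/k)(hr/k − ⌊hr/k⌋ − 1/2)`. -/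
def dedekindS (h : ℤ) (k : ℕ) : ℚ :=
  ∑ r ∈ Finset.Icc 1 k,
    (r : ℚ) / k * ((h : ℚ) * r / k - ⌊(h : ℚ) * r / k⌋ - 1 / 2)

/-- The Dedekind-type sum `t(h, k) = ∑_{1 ≤ r ≤ k, gcd(r,k)=1} (r/k)(hr/k − ⌊hr/k⌋ − 1/2)`. -/
def dedekindT (h : ℤ) (k : ℕ) : ℚ :=
  ∑ r ∈ (Finset.Icc 1 k).filter (fun r => Nat.gcd r k = 1),
    (r : ℚ) / k * ((h : ℚ) * r / k - ⌊(h : ℚ) * r / k⌋ - 1 / 2)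

/-!
Write `ρ r = h r mod k` and `T = ∑ r ρ r`, so that `s(h, k) = T / k² - (k + 1) / 4`.
Since `r ↦ ρ r` permutes the residues mod `k`, `∑ (ρ r)² = ∑ r² - k²`; expanding the
congruence `∑ (h r - ρ r)² ≡ 0 (mod k²)` and using `6 ∑ r² = k (k + 1) (2k + 1)` gives
`h · 12T ≡ k (h² + 1) (mod k²)`. Multiplying by `h̄` shows `12T = k c` with
`c ≡ h + h̄ (mod k)`, and `12k · s(h, k) = c - 3k (k + 1)`.
-/

lemma Finset.sum_Icc_one_add_eq_sum_range_add {M : Type*} [AddCommMonoid M] (g : ℕ → M)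
    (k : ℕ) :
    ∑ r ∈ Icc 1 k, g r + g 0 = ∑ r ∈ range k, g r + g k := by
  induction k with
  | zero => simp
  | succ k ih => rw [sum_Icc_succ_top (by omega), sum_range_succ, add_right_comm, ih]

lemma Finset.sum_Icc_one_id (k : ℕ) : ∑ r ∈ Icc 1 k, (r : ℚ) = k * (k + 1) / 2 := by
  induction k with
  | zero => simp
  | succ k ih => rw [sum_Icc_succ_top (by omega), ih]; push_cast; ring

lemma Finset.six_mul_sum_Icc_one_sq (k : ℕ) :
    6 * ∑ r ∈ Icc 1 k, (r : ℤ) ^ 2 = k * (k + 1) * (2 * k + 1) := by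
  induction k with
  | zero => simp
  | succ k ih => rw [sum_Icc_succ_top (by omega), mul_add, ih]; push_cast; ring

namespace ZMod

lemma sum_range_val_mul {M : Type*} [AddCommMonoid M] {k : ℕ} [NeZero k] {a b : ZMod k}
    (hab : a * b = 1) (f : ℕ → M) :
    ∑ r ∈ range k, f (a * r).val = ∑ r ∈ range k, f r := by
  have val_mul_val {a b : ZMod k} (hab : a * b = 1) (r : ℕ) (hr : r < k) :
      (b * ((a * r).val : ZMod k)).val = r := by
    rw [natCast_zmod_val, ← mul_assoc, mul_comm b, hab, one_mul, val_natCast, Nat.mod_eq_of_lt hr]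
  refine sum_nbij' (fun r => (a * r).val) (fun r => (b * r).val)
    (fun r _ => mem_range.2 (val_lt _)) (fun r _ => mem_range.2 (val_lt _))
    (fun r hr => val_mul_val hab r (mem_range.1 hr))
    (fun r hr => val_mul_val (by rwa [mul_comm]) r (mem_range.1 hr)) (fun r _ => rfl)

end ZMod

lemma sum_Icc_one_emod_sq {k : ℕ} (hk : k ≠ 0) {a b : ℤ} (hab : a * b ≡ 1 [ZMOD k]) :
    ∑ r ∈ Icc 1 k, (a * r % k) ^ 2 = ∑ r ∈ Icc 1 k, (r : ℤ) ^ 2 - k ^ 2 := by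
  have : NeZero k := ⟨hk⟩
  have hab' : (a : ZMod k) * b = 1 := by
    exact_mod_cast (ZMod.intCast_eq_intCast_iff _ _ _).2 hab
  have hval (r : ℕ) : a * r % k = (((a : ZMod k) * r).val : ℤ) := by
    rw [← ZMod.val_intCast]; push_cast; rfl
  have hperm := ZMod.sum_range_val_mul hab' (fun n => (n : ℤ) ^ 2)
  have h1 := sum_Icc_one_add_eq_sum_range_add (fun r => (((a : ZMod k) * r).val : ℤ) ^ 2) k
  have h2 := sum_Icc_one_add_eq_sum_range_add (fun r => (r : ℤ) ^ 2) k
  simp only [ZMod.natCast_self, Nat.cast_zero, mul_zero, ZMod.val_zero] at h1 h2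
  simp only [hval]
  linear_combination h1 + hperm - h2

def dedekindNum (h : ℤ) (k : ℕ) : ℤ := ∑ r ∈ Icc 1 k, r * (h * r % k)

lemma dedekindS_eq (h : ℤ) {k : ℕ} (hk : k ≠ 0) :
    dedekindS h k = dedekindNum h k / k ^ 2 - (k + 1) / 4 := by
  have hterm (r : ℕ) : (r : ℚ) / k * ((h : ℚ) * r / k - ⌊(h : ℚ) * r / k⌋ - 1 / 2)
      = ((r * (h * r % k) : ℤ) : ℚ) / k ^ 2 - r / (2 * k) := by
    have hfract : (h : ℚ) * r / k - ⌊(h : ℚ) * r / k⌋ = ((h * r % k : ℤ) : ℚ) / k := by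
      rw [Int.self_sub_floor, ← Int.fract_div_intCast_eq_div_intCast_mod]; push_cast; rfl
    rw [hfract]; push_cast; field_simp
  have hkQ : (k : ℚ) ≠ 0 := by exact_mod_cast hk
  rw [dedekindS, sum_congr rfl fun r _ => hterm r, sum_sub_distrib, ← sum_div, ← sum_div,
    sum_Icc_one_id, dedekindNum]
  push_cast
  field_simp
  ring

lemma mul_twelve_dedekindNum_modEq {k : ℕ} (hk : k ≠ 0) {h hbar : ℤ}
    (hinv : h * hbar ≡ 1 [ZMOD k]) :
    h * (12 * dedekindNum h k) ≡ k * (h ^ 2 + 1) [ZMOD k ^ 2] := by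
  have hdvd : (k : ℤ) ^ 2 ∣ ∑ r ∈ Icc 1 k, (h * r - h * r % k) ^ 2 :=
    dvd_sum fun r _ => by
      rw [Int.emod_def, sub_sub_cancel]; exact pow_dvd_pow_of_dvd (dvd_mul_right _ _) 2
  have hexpand : ∑ r ∈ Icc 1 k, (h * r - h * r % k) ^ 2
      = (h ^ 2 + 1) * ∑ r ∈ Icc 1 k, (r : ℤ) ^ 2 - 2 * h * dedekindNum h k - k ^ 2 := by
    have hsq (r : ℕ) : (h * r - h * r % k) ^ 2
        = h ^ 2 * (r : ℤ) ^ 2 - 2 * h * (r * (h * r % k)) + (h * r % k) ^ 2 := by ring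
    simp only [hsq, sum_add_distrib, sum_sub_distrib, ← mul_sum, sum_Icc_one_emod_sq hk hinv,
      dedekindNum]
    ring
  obtain ⟨c, hc⟩ := hdvd
  rw [Int.modEq_iff_dvd]
  exact ⟨6 * c + 6 - (h ^ 2 + 1) * (2 * k + 3), by
    linear_combination 6 * hc - 6 * hexpand - (h ^ 2 + 1) * six_mul_sum_Icc_one_sq k⟩

lemma exists_eq_mul_modEq_add_of_mul_modEq {k : ℕ} (hk : k ≠ 0) {h hbar N : ℤ}
    (hinv : h * hbar ≡ 1 [ZMOD k]) (hN : h * N ≡ k * (h ^ 2 + 1) [ZMOD k ^ 2]) :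
    ∃ c, N = k * c ∧ c ≡ h + hbar [ZMOD k] := by
  have hinv' : (h : ZMod k) * hbar = 1 := by
    exact_mod_cast (ZMod.intCast_eq_intCast_iff _ _ _).2 hinv
  have hdvd : (k : ℤ) ∣ N := by
    have hhN : ((h * N : ℤ) : ZMod k) = ((k * (h ^ 2 + 1) : ℤ) : ZMod k) :=
      (ZMod.intCast_eq_intCast_iff _ _ _).2 (Int.ModEq.of_mul_right _ (sq (k : ℤ) ▸ hN))
    push_cast at hhN
    rw [ZMod.natCast_self, zero_mul] at hhN
    rw [← ZMod.intCast_zmod_eq_zero_iff_dvd]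
    linear_combination hbar * hhN - N * hinv'
  obtain ⟨c, rfl⟩ := hdvd
  refine ⟨c, rfl, ?_⟩
  have hc : h * c ≡ h ^ 2 + 1 [ZMOD k] :=
    Int.ModEq.mul_left_cancel' (c := k) (by exact_mod_cast hk)
      (by rw [← sq]; convert hN using 1; ring)
  rw [← ZMod.intCast_eq_intCast_iff] at hc ⊢
  push_cast at hc ⊢
  linear_combination (h - c) * hinv' + hbar * hc

theorem twelve_k_dedekindS_cong_general (k : ℕ) (hk : k.Prime) (h : ℤ) :
    ∀ hbar : ℤ, h * hbar ≡ 1 [ZMOD (k : ℤ)] →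
      ∃ m : ℤ, 12 * (k : ℚ) * dedekindS h k = (m : ℚ) ∧ m ≡ h + hbar [ZMOD (k : ℤ)] := by
  intro hbar hinv
  have hk0 : k ≠ 0 := hk.ne_zero
  obtain ⟨c, hc, hcmod⟩ :=
    exists_eq_mul_modEq_add_of_mul_modEq hk0 hinv (mul_twelve_dedekindNum_modEq hk0 hinv)
  refine ⟨c + k * (-3 * (k + 1)), ?_, Int.modEq_add_fac_self.trans hcmod⟩
  have hcQ : (12 * dedekindNum h k : ℚ) = k * c := by exact_mod_cast hc
  rw [dedekindS_eq h hk0]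
  push_cast
  field_simp
  linear_combination 4 * hcQ

/-- For a prime `k` and `gcd(h, k) = 1`, the quantity `12k·s(h,k)` is an integer
congruent to `h + h̄` modulo `k`, where `h·h̄ ≡ 1 (mod k)`. -/
theorem twelve_k_dedekindS_cong (k : ℕ) (hk : k.Prime) (h : ℤ)
    (hcop : Int.gcd h (k : ℤ) = 1) :
    ∀ hbar : ℤ, h * hbar ≡ 1 [ZMOD (k : ℤ)] →
      ∃ m : ℤ, 12 * (k : ℚ) * dedekindS h k = (m : ℚ) ∧ m ≡ h + hbar [ZMOD (k : ℤ)] :=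
  twelve_k_dedekindS_cong_general k hk h
end

section
/- Let G be a cyclic group of prime order p with gcd(p, 6) = 1 (equivalently, p ≥ 5). Then every minimal zero-sum sequence S of length 4 over G has ind(S) = 1. -/
open Finset

/-!
Write `valSum x c = ∑ᵢ (c xᵢ).val`, so that `‖x‖_{c⁻¹} = valSum x c / p`. For `c ≠ 0` it is
`p`, `2p` or `3p`, and `valSum x c + valSum x (-c) = 4p`; so if the index were not `1`, then
`valSum x c = 2p` for every `c ≠ 0`. Fourier analysis on `ZMod p` refutes this. For a primitive
additive character `ψ`, `∑_c (c a).val ψ(c w) = p / (ψ(a⁻¹ w) - 1)`, so the numbers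
`zᵢ = ψ(xᵢ⁻¹ w)` satisfy `∑ᵢ 1 / (zᵢ - 1) = -2`, that is `2 z₀z₁z₂z₃ + ∑ zᵢ = 2 + ∑ zⱼzₖzₗ`.
By linear independence of characters the multisets `{s, s, y₀, …, y₃}` and
`{0, 0, s - y₀, …, s - y₃}` coincide, where `yᵢ = xᵢ⁻¹` and `s = ∑ yᵢ`. Hence `s = 0` and
`y₀ = -yⱼ` for some `j`, which contradicts minimality (`j = 0` is impossible as `p ≠ 2`).
-/

section ValSum

variable {n : ℕ} {ι : Type*} [Fintype ι]

def valSum (x : ι → ZMod n) (c : ZMod n) : ℕ := ∑ i, (c * x i).val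

variable {x : ι → ZMod n} {c : ZMod n}

lemma valSum_pos {i : ι} (hi : c * x i ≠ 0) : 0 < valSum x c :=
  ((ZMod.val_pos).mpr hi).trans_le
    (single_le_sum (f := fun i ↦ (c * x i).val) (fun _ _ ↦ Nat.zero_le _) (mem_univ i))

variable [NeZero n]

lemma natCast_valSum : (valSum x c : ZMod n) = c * ∑ i, x i := by
  simp [valSum, mul_sum]

lemma dvd_valSum (hx : ∑ i, x i = 0) : n ∣ valSum x c := by
  rw [← ZMod.natCast_eq_zero_iff, natCast_valSum, hx, mul_zero]

lemma valSum_add_valSum_neg (hc : ∀ i, c * x i ≠ 0) :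
    valSum x c + valSum x (-c) = Fintype.card ι * n := by
  have hpair : ∀ i, (c * x i).val + (-c * x i).val = n := fun i ↦ by
    rw [neg_mul, ZMod.neg_val, if_neg (hc i), Nat.add_sub_cancel' (ZMod.val_lt _).le]
  simp only [valSum, ← sum_add_distrib, hpair, sum_const, card_univ, smul_eq_mul]

end ValSum

lemma isAddGenerator_iff_ne_zero {p : ℕ} [Fact p.Prime] {g : ZMod p} :
    IsAddGenerator p g ↔ g ≠ 0 := by
  refine ⟨?_, zmultiples_eq_top_of_prime_card (Nat.card_zmod p)⟩
  rintro h rfl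
  simpa using (h ▸ AddSubgroup.mem_top 1 : (1 : ZMod p) ∈ AddSubgroup.zmultiples 0)

namespace IsMinZeroSum4

variable {n : ℕ} {x : Fin 4 → ZMod n}

lemma add_ne_zero (hx : IsMinZeroSum4 n x) {i j : Fin 4} (hij : i ≠ j) : x i + x j ≠ 0 := by
  have hcard := Finset.card_pair hij
  simpa [Finset.sum_pair hij] using
    hx.2 {i, j} (by simp) (fun h ↦ by rw [h] at hcard; simp at hcard)

end IsMinZeroSum4

lemma sub_one_mul_sum_range_mul_pow_add {R : Type*} [CommRing R] (ζ : R) (m : ℕ) :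
    (ζ - 1) * ∑ k ∈ range m, (k : R) * ζ ^ k + ζ * ∑ k ∈ range m, ζ ^ k = m * ζ ^ m := by
  induction m with
  | zero => simp
  | succ m ih =>
    simp only [sum_range_succ, Nat.cast_succ]
    linear_combination ih

lemma ZMod.sum_comp_val {n : ℕ} [NeZero n] {M : Type*} [AddCommMonoid M] (f : ℕ → M) :
    ∑ c : ZMod n, f c.val = ∑ k ∈ range n, f k := by
  refine Finset.sum_nbij (·.val) (by simp [ZMod.val_lt]) (ZMod.val_injective n).injOn
    (fun k hk ↦ ⟨k, by simp, ZMod.val_cast_of_lt (mem_range.mp hk)⟩) (fun _ _ ↦ rfl)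

section Fourier

variable {n : ℕ} [NeZero n] {K : Type*} [Field K] {ψ : AddChar (ZMod n) K}

lemma sub_one_mul_sum_val_mul_apply (hψ : ψ.IsPrimitive) {y : ZMod n} (hy : y ≠ 0) :
    (ψ y - 1) * ∑ c : ZMod n, (c.val : K) * ψ (c * y) = n := by
  have hpow : ∀ c : ZMod n, ψ (c * y) = ψ y ^ c.val := fun c ↦ by
    rw [← AddChar.map_nsmul_eq_pow, nsmul_eq_mul, ZMod.natCast_zmod_val]
  have hgeom : ∑ c : ZMod n, ψ y ^ c.val = 0 := by
    simpa [hpow, hy] using AddChar.sum_mulShift y hψ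
  have hroot : ψ y ^ n = 1 := by
    rw [← AddChar.map_nsmul_eq_pow, nsmul_eq_mul, ZMod.natCast_self, zero_mul,
      AddChar.map_zero_eq_one]
  have key := sub_one_mul_sum_range_mul_pow_add (ψ y) n
  rw [← ZMod.sum_comp_val (fun k ↦ (k : K) * ψ y ^ k), ← ZMod.sum_comp_val (ψ y ^ ·), hgeom,
    hroot] at key
  simpa [hpow] using key

variable [CharZero K]

lemma eq_of_sum_map_apply_mul_eq (hψ : ψ.IsPrimitive) {M N : Multiset (ZMod n)}
    (h : ∀ w, (M.map (ψ <| · * w)).sum = (N.map (ψ <| · * w)).sum) : M = N := by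
  have sum_mul_eq_count : ∀ (L : Multiset (ZMod n)) (z : ZMod n),
      ∑ w, ψ (-(z * w)) * (L.map (ψ <| · * w)).sum = L.count z * n := by
    intro L z
    induction L using Multiset.induction_on with
    | empty => simp
    | cons E L ih =>
      have orth : ∑ w, ψ (-(z * w)) * ψ (E * w) = if E = z then (n : K) else 0 := by
        simp_rw [← AddChar.map_add_eq_mul, show ∀ w, -(z * w) + E * w = w * (E - z) from
          fun w ↦ by ring, AddChar.sum_mulShift _ hψ, sub_eq_zero, ZMod.card, Nat.cast_ite,
          Nat.cast_zero]
      simp only [Multiset.map_cons, Multiset.sum_cons, mul_add, sum_add_distrib, ih, orth,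
        Multiset.count_cons, eq_comm (a := E)]
      split_ifs <;> push_cast <;> ring
  ext z
  have hn : (n : K) ≠ 0 := Nat.cast_ne_zero.mpr (NeZero.ne n)
  have hcount : (M.count z : K) * n = N.count z * n := by
    rw [← sum_mul_eq_count, ← sum_mul_eq_count]
    simp_rw [h]
  exact_mod_cast mul_right_cancel₀ hn hcount

end Fourier

lemma two_mul_prod_add_sum_eq_of_sum_eq {K : Type*} [Field K] {q : K} (hq : q ≠ 0)
    {z F : Fin 4 → K} (hF : ∀ i, (z i - 1) * F i = q) (hsum : ∑ i, F i = -2 * q) :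
    2 * (z 0 * z 1 * z 2 * z 3) + (z 0 + z 1 + z 2 + z 3) =
      2 + (z 1 * z 2 * z 3 + z 0 * z 2 * z 3 + z 0 * z 1 * z 3 + z 0 * z 1 * z 2) := by
  rw [Fin.sum_univ_four] at hsum
  have key : q * (2 * (z 0 * z 1 * z 2 * z 3) + (z 0 + z 1 + z 2 + z 3) -
      (2 + (z 1 * z 2 * z 3 + z 0 * z 2 * z 3 + z 0 * z 1 * z 3 + z 0 * z 1 * z 2))) = 0 := by
    linear_combination (z 0 - 1) * (z 1 - 1) * (z 2 - 1) * (z 3 - 1) * hsum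
      - (z 1 - 1) * (z 2 - 1) * (z 3 - 1) * hF 0 - (z 0 - 1) * (z 2 - 1) * (z 3 - 1) * hF 1
      - (z 0 - 1) * (z 1 - 1) * (z 3 - 1) * hF 2 - (z 0 - 1) * (z 1 - 1) * (z 2 - 1) * hF 3
  exact sub_eq_zero.mp ((mul_eq_zero.mp key).resolve_left hq)

section Prime

variable {p : ℕ} [Fact p.Prime]

lemma sub_one_mul_sum_val_mul_mul_apply {K : Type*} [Field K] {ψ : AddChar (ZMod p) K}
    (hψ : ψ.IsPrimitive) {a w : ZMod p} (ha : a ≠ 0) (hw : w ≠ 0) :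
    (ψ (a⁻¹ * w) - 1) * ∑ c, ((c * a).val : K) * ψ (c * w) = p := by
  rw [← sub_one_mul_sum_val_mul_apply hψ (mul_ne_zero (inv_ne_zero ha) hw)]
  congr 1
  exact Fintype.sum_equiv (Equiv.mulRight₀ a ha) _ _ fun c ↦ by
    simp [mul_assoc, mul_inv_cancel_left₀ ha]

lemma valSum_eq_two_mul {x : Fin 4 → ZMod p} (hx : ∑ i, x i = 0) (hne : ∀ i, x i ≠ 0)
    (h : ∀ c ≠ 0, valSum x c ≠ p) {c : ZMod p} (hc : c ≠ 0) : valSum x c = 2 * p := by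
  have hc' : -c ≠ 0 := neg_ne_zero.mpr hc
  obtain ⟨k, hk⟩ := dvd_valSum (c := c) hx
  obtain ⟨l, hl⟩ := dvd_valSum (c := -c) hx
  have hkl : k + l = 4 := by
    refine Nat.eq_of_mul_eq_mul_left (Fact.out : p.Prime).pos ?_
    rw [mul_add, ← hk, ← hl, valSum_add_valSum_neg fun i ↦ mul_ne_zero hc (hne i)]
    simp [mul_comm]
  have hk0 : k ≠ 0 := by
    rintro rfl
    exact (valSum_pos (mul_ne_zero hc (hne 0))).ne' (by simpa using hk)
  have hl0 : l ≠ 0 := by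
    rintro rfl
    exact (valSum_pos (mul_ne_zero hc' (hne 0))).ne' (by simpa using hl)
  have hk1 : k ≠ 1 := by
    rintro rfl
    exact h c hc (by simpa using hk)
  have hl1 : l ≠ 1 := by
    rintro rfl
    exact h (-c) hc' (by simpa using hl)
  rw [hk, show k = 2 by omega, mul_comm]

lemma multiset_inv_eq_of_valSum_eq_two_mul {x : Fin 4 → ZMod p} (hne : ∀ i, x i ≠ 0)
    (hS : ∀ c ≠ 0, valSum x c = 2 * p) :
    ({∑ i, x⁻¹ i, ∑ i, x⁻¹ i, x⁻¹ 0, x⁻¹ 1, x⁻¹ 2, x⁻¹ 3} : Multiset (ZMod p)) =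
      {0, 0, x⁻¹ 1 + x⁻¹ 2 + x⁻¹ 3, x⁻¹ 0 + x⁻¹ 2 + x⁻¹ 3, x⁻¹ 0 + x⁻¹ 1 + x⁻¹ 3,
        x⁻¹ 0 + x⁻¹ 1 + x⁻¹ 2} := by
  have hψ := ZMod.isPrimitive_stdAddChar p
  refine eq_of_sum_map_apply_mul_eq hψ fun w ↦ ?_
  rcases eq_or_ne w 0 with rfl | hw
  · simp
  set ψ := ZMod.stdAddChar (N := p)
  set F : Fin 4 → ℂ := fun i ↦ ∑ c, ((c * x i).val : ℂ) * ψ (c * w)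
  have hF (i : Fin 4) : (ψ ((x i)⁻¹ * w) - 1) * F i = p :=
    sub_one_mul_sum_val_mul_mul_apply hψ (hne i) hw
  have hval (c : ZMod p) : (valSum x c : ℂ) = 2 * p - if c = 0 then 2 * p else 0 := by
    split_ifs with hc
    · simp [hc, valSum]
    · simp [hS c hc]
  have hsum : ∑ i, F i = -2 * p := by
    calc ∑ i, F i = ∑ c, (valSum x c : ℂ) * ψ (c * w) := by
          simp only [F, valSum, Nat.cast_sum, sum_mul]
          exact sum_comm
      _ = -2 * p := by
          simp [hval, sub_mul, sum_sub_distrib, ← mul_sum, AddChar.sum_mulShift _ hψ, hw]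
  have hp : (p : ℂ) ≠ 0 := Nat.cast_ne_zero.mpr (Fact.out : p.Prime).ne_zero
  have := two_mul_prod_add_sum_eq_of_sum_eq hp hF hsum
  simp only [Pi.inv_apply, Fin.sum_univ_four, Multiset.insert_eq_cons, Multiset.map_cons,
    Multiset.map_singleton, Multiset.sum_cons, Multiset.sum_singleton, add_mul, zero_mul,
    AddChar.map_add_eq_mul, AddChar.map_zero_eq_one]
  linear_combination this

lemma multiset_ne_of_add_ne_zero {y : Fin 4 → ZMod p} (hp2 : p ≠ 2) (hy : ∀ i, y i ≠ 0)
    (hpair : ∀ {i j}, i ≠ j → y i + y j ≠ 0) :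
    ({∑ i, y i, ∑ i, y i, y 0, y 1, y 2, y 3} : Multiset (ZMod p)) ≠
      {0, 0, y 1 + y 2 + y 3, y 0 + y 2 + y 3, y 0 + y 1 + y 3, y 0 + y 1 + y 2} := by
  intro h
  have hzero : (0 : ZMod p) ∈ ({∑ i, y i, ∑ i, y i, y 0, y 1, y 2, y 3} : Multiset _) := by
    rw [h]
    simp
  have hy0 : y 0 ∈ ({0, 0, y 1 + y 2 + y 3, y 0 + y 2 + y 3, y 0 + y 1 + y 3,
      y 0 + y 1 + y 2} : Multiset _) := by
    rw [← h]
    simp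
  simp only [Multiset.insert_eq_cons, Multiset.mem_cons, Multiset.mem_singleton] at hzero hy0
  have hs : y 0 + y 1 + y 2 + y 3 = 0 := by
    simpa [Fin.sum_univ_four, eq_comm (a := (0 : ZMod p)), hy] using hzero
  have h2 : (2 : ZMod p) ≠ 0 := Ring.two_ne_zero (by rwa [ZMod.ringChar_zmod_n])
  rcases hy0 with h0 | h0 | h0 | h0 | h0 | h0
  · exact hy 0 h0
  · exact hy 0 h0
  · exact hy 0 ((mul_eq_zero.mp (by linear_combination hs + h0 : 2 * y 0 = 0)).resolve_left h2)
  · exact hpair (by decide : (2 : Fin 4) ≠ 3) (by linear_combination -h0)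
  · exact hpair (by decide : (1 : Fin 4) ≠ 3) (by linear_combination -h0)
  · exact hpair (by decide : (1 : Fin 4) ≠ 2) (by linear_combination -h0)

lemma exists_valSum_eq (hp2 : p ≠ 2) {x : Fin 4 → ZMod p} (hx : IsMinZeroSum4 p x) :
    ∃ c ≠ 0, valSum x c = p := by
  by_contra! h
  have hne := hx.ne_zero
  refine multiset_ne_of_add_ne_zero hp2 (y := x⁻¹) (fun i ↦ inv_ne_zero (hne i))
    (fun {i j} hij hinv ↦ ?_)
    (multiset_inv_eq_of_valSum_eq_two_mul hne fun c hc ↦ valSum_eq_two_mul hx.1 hne h hc)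
  refine hx.add_ne_zero hij ?_
  have : (x i)⁻¹ = (-x j)⁻¹ := by
    rw [inv_neg]
    exact eq_neg_of_add_eq_zero_left hinv
  rw [inv_injective this, neg_add_cancel]

end Prime

lemma gNorm_eq_valSum_div {n : ℕ} {g : ZMod n} {x : Fin 4 → ZMod n}
    (h : ∀ i, g⁻¹ * x i ≠ 0) : gNorm n g x = valSum x g⁻¹ / n := by
  simp [gNorm, valSum, rep, h]

lemma one_le_gNorm_s13 {n : ℕ} [NeZero n] {g : ZMod n} {x : Fin 4 → ZMod n} (hx : ∑ i, x i = 0)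
    (h : ∀ i, g⁻¹ * x i ≠ 0) : 1 ≤ gNorm n g x := by
  rw [gNorm_eq_valSum_div h, one_le_div (by simpa using NeZero.pos n)]
  exact_mod_cast Nat.le_of_dvd (valSum_pos (h 0)) (dvd_valSum hx)

/-- If `G` is cyclic of prime order `p` with `gcd(p, 6) = 1`, then every minimal
zero-sum sequence of length 4 over `G` has index 1. -/
theorem index_conjecture_prime (p : ℕ) (hp : p.Prime) (h6 : Nat.gcd p 6 = 1)
    (x : Fin 4 → ZMod p) (hx : IsMinZeroSum4 p x) :
    seqIndex p x = 1 := by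
  have := Fact.mk hp
  have hp2 : p ≠ 2 := by
    rintro rfl
    norm_num at h6
  have hmul_ne {g : ZMod p} (hg : g ≠ 0) (i : Fin 4) : g⁻¹ * x i ≠ 0 :=
    mul_ne_zero (inv_ne_zero hg) (hx.ne_zero i)
  obtain ⟨c, hc, hcp⟩ := exists_valSum_eq hp2 hx
  refine IsLeast.csInf_eq ⟨⟨c⁻¹, isAddGenerator_iff_ne_zero.mpr (inv_ne_zero hc), ?_⟩, ?_⟩
  · rw [gNorm_eq_valSum_div (hmul_ne (inv_ne_zero hc)), inv_inv, hcp,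
      div_self (Nat.cast_ne_zero.mpr hp.ne_zero)]
  · rintro _ ⟨g, hg, rfl⟩
    exact one_le_gNorm_s13 hx.1 (hmul_ne (isAddGenerator_iff_ne_zero.mp hg))
end
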